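/- arXiv:2404.16628 — 2 statements merged into one kernel-verified Lean document; each statement's English description precedes it below -/
import Mathlib

section
/- Let G be a group with a fixed finite generating set and associated word metric d_G, let P and Q be subgroups of G, and let g ∈ G. Then P and gQg⁻¹ are commensurable subgroups if and only if the Hausdorff distance Hdist_G(P, gQ) is finite. In particular, comm_G(P) = {g ∈ G : Hdist_G(P, gP) < ∞}. -/
open scoped Pointwise ENNReal NNReal

namespace CIC

variable {G : Type*} [Group G] {H : Type*} [Group H]

/-- Word length of `g` with respect to the generating set `S`: the least `n` such that `g`
is a product of `n` elements of `S ∪ S⁻¹`. -/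
noncomputable def wordLength (S : Set G) (g : G) : ℕ :=
  sInf {n | ∃ l : List G, (∀ x ∈ l, x ∈ S ∨ x⁻¹ ∈ S) ∧ l.length = n ∧ l.prod = g}

/-- The word metric on `G` associated to the generating set `S`. -/
noncomputable def wdist (S : Set G) (g h : G) : ℕ := wordLength S (g⁻¹ * h)

/-- Closed `r`-neighborhood of `A` with respect to the word metric of `S`. -/
def nbhd (S : Set G) (r : ℝ) (A : Set G) : Set G :=
  {x | ∃ a ∈ A, (wdist S a x : ℝ) ≤ r}

/-- Hausdorff distance between subsets of `G`, valued in `[0,∞]`: the infimum of those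
`r ≥ 0` such that each set is contained in the closed `r`-neighborhood of the other,
the infimum of the empty set being `∞`. -/
noncomputable def hdist (S : Set G) (A B : Set G) : ℝ≥0∞ :=
  ⨅ (r : ℝ≥0) (_ : A ⊆ nbhd S (r : ℝ) B ∧ B ⊆ nbhd S (r : ℝ) A), (r : ℝ≥0∞)

/-- The conjugate subgroup `g P g⁻¹`. -/
def conj (g : G) (P : Subgroup G) : Subgroup G := P.map (MulAut.conj g).toMonoidHom

/-- The set `G/𝒫` of all left cosets `gP` with `g ∈ G` and `P ∈ 𝒫`. -/
def cosets (Ps : Finset (Subgroup G)) : Set (Set G) :=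
  {A | ∃ (g : G) (P : Subgroup G), P ∈ Ps ∧ A = g • (P : Set G)}

/-- A group pair `(G, 𝒫)`: `S` is a finite generating set of `G` and `𝒫` is a finite
collection of infinite subgroups of `G`. -/
structure IsGroupPair (S : Finset G) (Ps : Finset (Subgroup G)) : Prop where
  generates : Subgroup.closure (S : Set G) = ⊤
  infinite : ∀ P ∈ Ps, (P : Set G).Infinite

/-- An `(L,C,M)`-quasi-isometry of group pairs `q : (G,𝒫) → (H,𝒬)`. -/
structure IsPairQI (S : Finset G) (T : Finset H)
    (Ps : Finset (Subgroup G)) (Qs : Finset (Subgroup H))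
    (L C M : ℝ≥0) (q : G → H) : Prop where
  one_le : 1 ≤ L
  lower : ∀ a b : G, (wdist (S : Set G) a b : ℝ) / L - C ≤ (wdist (T : Set H) (q a) (q b) : ℝ)
  upper : ∀ a b : G, (wdist (T : Set H) (q a) (q b) : ℝ) ≤ L * (wdist (S : Set G) a b : ℝ) + C
  dense : ∀ y : H, ∃ x : G, (wdist (T : Set H) (q x) y : ℝ) ≤ C
  coset_fwd : ∀ A ∈ cosets Ps, ∃ B ∈ cosets Qs, hdist (T : Set H) (q '' A) B < (M : ℝ≥0∞)
  coset_bwd : ∀ B ∈ cosets Qs, ∃ A ∈ cosets Ps, hdist (T : Set H) (q '' A) B < (M : ℝ≥0∞)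

/-!
In the word metric the closed `r`-neighbourhood of `A` is `A * B_r`, and the ball `B_r` of a
finite generating set is finite. So `Hdist(A, B) < ∞` says exactly that `A ⊆ B F` and `B ⊆ A F`
for some finite `F`. For subgroups `K, L`, a covering `K ⊆ L F` by finitely many right cosets of
`L` is the same as `L ∩ K` having finite index in `K`. Finally `gQ = (gQg⁻¹) g`, and a right
translation by one element does not affect such coverings.
-/

lemma exists_list_length_eq_wordLength {S : Set G} (hS : Subgroup.closure S = ⊤) (g : G) :
    ∃ l : List G, (∀ x ∈ l, x ∈ S ∨ x⁻¹ ∈ S) ∧ l.length = wordLength S g ∧ l.prod = g := by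
  have hg : g ∈ Submonoid.closure (S ∪ S⁻¹) := by
    rw [← Subgroup.closure_toSubmonoid, hS]
    exact Subgroup.mem_top g
  obtain ⟨l, hl, hprod⟩ := Submonoid.exists_list_of_mem_closure hg
  exact Nat.sInf_mem (s := {n | ∃ l : List G, (∀ x ∈ l, x ∈ S ∨ x⁻¹ ∈ S) ∧ l.length = n ∧
    l.prod = g}) ⟨l.length, l, hl, rfl, hprod⟩

lemma finite_setOf_wordLength_le {S : Set G} (hSfin : S.Finite) (hS : Subgroup.closure S = ⊤)
    (n : ℕ) : {g | wordLength S g ≤ n}.Finite := by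
  have : Finite {x : G // x ∈ S ∨ x⁻¹ ∈ S} := (hSfin.union hSfin.inv).to_subtype
  refine ((List.finite_length_le {x : G // x ∈ S ∨ x⁻¹ ∈ S} n).image
    fun l => (l.map Subtype.val).prod).subset ?_
  intro g hg
  obtain ⟨l, hl, hlen, hprod⟩ := exists_list_length_eq_wordLength hS g
  lift l to List {x : G // x ∈ S ∨ x⁻¹ ∈ S} using hl
  refine ⟨l, ?_, hprod⟩
  rw [List.length_map] at hlen
  exact hlen.trans_le hg

lemma nbhd_eq_mul (S : Set G) (r : ℝ) (A : Set G) :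
    nbhd S r A = A * {w | (wordLength S w : ℝ) ≤ r} := by
  ext x
  simp only [nbhd, wdist, Set.mem_mul, Set.mem_ofPred_eq]
  constructor
  · rintro ⟨a, ha, hr⟩
    exact ⟨a, ha, a⁻¹ * x, hr, mul_inv_cancel_left a x⟩
  · rintro ⟨a, ha, w, hw, rfl⟩
    exact ⟨a, ha, by rwa [inv_mul_cancel_left]⟩

lemma nbhd_mono (S : Set G) {r s : ℝ} (hrs : r ≤ s) (A : Set G) : nbhd S r A ⊆ nbhd S s A :=
  fun _ ⟨a, ha, hr⟩ => ⟨a, ha, hr.trans hrs⟩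

lemma hdist_lt_top_iff (S : Set G) (A B : Set G) :
    hdist S A B < ⊤ ↔ ∃ r : ℝ≥0, A ⊆ nbhd S r B ∧ B ⊆ nbhd S r A := by
  simp [hdist, iInf_lt_iff]

/-- For the word metric of a finite generating set, this is coarse containment
`A ⊆ N_r(B)` for some `r`. -/
def CoarselySubset (A B : Set G) : Prop := ∃ F : Set G, F.Finite ∧ A ⊆ B * F

lemma coarselySubset_iff_exists_subset_nbhd {S : Set G} (hSfin : S.Finite)
    (hS : Subgroup.closure S = ⊤) {A B : Set G} :
    CoarselySubset A B ↔ ∃ r : ℝ≥0, A ⊆ nbhd S r B := by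
  simp only [nbhd_eq_mul]
  constructor
  · rintro ⟨F, hF, hAB⟩
    refine ⟨(hF.toFinset.sup (wordLength S) : ℕ),
      hAB.trans (Set.mul_subset_mul_left fun w hw => ?_)⟩
    exact_mod_cast Finset.le_sup (f := wordLength S) (hF.mem_toFinset.mpr hw)
  · rintro ⟨r, hAB⟩
    refine ⟨_, (finite_setOf_wordLength_le hSfin hS ⌊(r : ℝ)⌋₊).subset fun w hw => ?_, hAB⟩
    exact Nat.le_floor hw

lemma coarselySubset_mul_singleton_right {A B : Set G} (g : G) :
    CoarselySubset A (B * {g}) ↔ CoarselySubset A B := by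
  constructor
  · rintro ⟨F, hF, hAB⟩
    exact ⟨{g} * F, (Set.finite_singleton g).mul hF, by rwa [← mul_assoc]⟩
  · rintro ⟨F, hF, hAB⟩
    refine ⟨{g⁻¹} * F, (Set.finite_singleton _).mul hF, ?_⟩
    rwa [mul_assoc, ← mul_assoc ({g} : Set G), Set.singleton_mul_singleton, mul_inv_cancel,
      Set.singleton_one, one_mul]

lemma coarselySubset_mul_singleton_left {A B : Set G} (g : G) :
    CoarselySubset (A * {g}) B ↔ CoarselySubset A B := by
  constructor
  · rintro ⟨F, hF, hAB⟩
    refine ⟨F * {g⁻¹}, hF.mul (Set.finite_singleton _), ?_⟩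
    calc A = A * {g} * {g⁻¹} := by
          rw [mul_assoc, Set.singleton_mul_singleton, mul_inv_cancel, Set.singleton_one, mul_one]
      _ ⊆ B * F * {g⁻¹} := Set.mul_subset_mul_right hAB
      _ = B * (F * {g⁻¹}) := mul_assoc _ _ _
  · rintro ⟨F, hF, hAB⟩
    refine ⟨F * {g}, hF.mul (Set.finite_singleton _), ?_⟩
    rw [← mul_assoc]
    exact Set.mul_subset_mul_right hAB

lemma hdist_lt_top_iff_coarselySubset {S : Set G} (hSfin : S.Finite)
    (hS : Subgroup.closure S = ⊤) {A B : Set G} :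
    hdist S A B < ⊤ ↔ CoarselySubset A B ∧ CoarselySubset B A := by
  rw [hdist_lt_top_iff, coarselySubset_iff_exists_subset_nbhd hSfin hS,
    coarselySubset_iff_exists_subset_nbhd hSfin hS]
  constructor
  · rintro ⟨r, hAB, hBA⟩
    exact ⟨⟨r, hAB⟩, r, hBA⟩
  · rintro ⟨⟨r, hAB⟩, s, hBA⟩
    exact ⟨max r s, hAB.trans (nbhd_mono _ (by simp) _), hBA.trans (nbhd_mono _ (by simp) _)⟩

lemma coarselySubset_coe_iff_relIndex_ne_zero {K L : Subgroup G} :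
    CoarselySubset (K : Set G) L ↔ L.relIndex K ≠ 0 := by
  rw [Subgroup.relIndex, Subgroup.index_ne_zero_iff_finite]
  constructor
  · rintro ⟨F, hF, hKL⟩
    let ψ : K ⧸ L.subgroupOf K → G ⧸ L := fun c => ((c.out : G) : G ⧸ L)
    have hψ : Function.Injective ψ := by
      intro c₁ c₂ h
      rw [← QuotientGroup.out_eq' c₁, ← QuotientGroup.out_eq' c₂, QuotientGroup.eq,
        Subgroup.mem_subgroupOf]
      simpa using QuotientGroup.eq.mp h
    suffices Set.range ψ ⊆ QuotientGroup.mk '' F⁻¹ by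
      have := ((hF.inv.image _).subset this).to_subtype
      exact Finite.of_injective_finite_range hψ
    rintro _ ⟨c, rfl⟩
    obtain ⟨l, hl, f, hf, hlf⟩ := hKL (inv_mem c.out.2)
    refine ⟨f⁻¹, by simpa using hf, QuotientGroup.eq.mpr ?_⟩
    dsimp only at hlf
    rw [inv_inv, show f = l⁻¹ * (c.out : G)⁻¹ by rw [← hlf]; group]
    simpa using inv_mem hl
  · intro _
    refine ⟨Set.range fun c : K ⧸ L.subgroupOf K => (c.out : G)⁻¹, Set.finite_range _,
      fun k hk => ?_⟩
    obtain ⟨l, hl⟩ := QuotientGroup.mk_out_eq_mul (L.subgroupOf K) ⟨k, hk⟩⁻¹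
    refine ⟨l, l.2, _, ⟨QuotientGroup.mk ⟨k, hk⟩⁻¹, rfl⟩, ?_⟩
    dsimp only
    rw [hl]
    simp

lemma smul_coe_eq_conj_mul_singleton (g : G) (Q : Subgroup G) :
    g • (Q : Set G) = (conj g Q : Set G) * {g} := by
  ext x
  simp [conj, Set.mem_smul_set, Set.mul_singleton]

lemma toConjAct_smul_eq_conj (g : G) (P : Subgroup G) : ConjAct.toConjAct g • P = conj g P := by
  ext x
  simp only [Subgroup.mem_pointwise_smul_iff_inv_smul_mem, ConjAct.smul_def, conj,
    Subgroup.mem_map]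
  constructor
  · intro hx
    exact ⟨_, hx, by simp [mul_assoc]⟩
  · rintro ⟨y, hy, rfl⟩
    simpa [mul_assoc] using hy

theorem commensurable_conj_iff_hdist_lt_top {S : Finset G}
    (hS : Subgroup.closure (S : Set G) = ⊤) (P Q : Subgroup G) (g : G) :
    Subgroup.Commensurable P (conj g Q) ↔ hdist (S : Set G) (P : Set G) (g • (Q : Set G)) < ⊤ := by
  rw [hdist_lt_top_iff_coarselySubset S.finite_toSet hS, smul_coe_eq_conj_mul_singleton,
    coarselySubset_mul_singleton_right, coarselySubset_mul_singleton_left,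
    coarselySubset_coe_iff_relIndex_ne_zero, coarselySubset_coe_iff_relIndex_ne_zero, and_comm]
  rfl

/-- Subgroups `P` and `gQg⁻¹` are commensurable iff the Hausdorff distance between `P` and
the left coset `gQ` is finite; in particular the commensurator of `P` is the set of `g` with
`Hdist(P, gP) < ∞`. -/
theorem statement0 (S : Finset G) (hS : Subgroup.closure (S : Set G) = ⊤)
    (P Q : Subgroup G) (g : G) :
    (Subgroup.Commensurable P (conj g Q) ↔ hdist (S : Set G) (P : Set G) (g • (Q : Set G)) < ⊤) ∧
    ((Subgroup.Commensurable.commensurator P : Set G) =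
      {h : G | hdist (S : Set G) (P : Set G) (h • (P : Set G)) < ⊤}) := by
  refine ⟨commensurable_conj_iff_hdist_lt_top hS P Q g, Set.ext fun h => ?_⟩
  rw [SetLike.mem_coe, Subgroup.Commensurable.commensurator_mem_iff, toConjAct_smul_eq_conj,
    Subgroup.Commensurable.comm]
  exact commensurable_conj_iff_hdist_lt_top hS P P h

end CIC
end

section
/- If a group pair (G,𝒫) has finite height, then it is reducible; that is, if there is a finite upper bound on the number m of distinct cosets g₁P₁, …, g_mP_m ∈ G/𝒫 with ⋂_{i=1}^m g_iP_ig_i⁻¹ infinite, then every P ∈ 𝒫 has finite index in its commensurator comm_G(P). -/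
open scoped Pointwise ENNReal NNReal

namespace CIC

variable {G : Type*} [Group G] {H : Type*} [Group H]

/-- `𝒫` has finite height in `G`: there is a bound on the number of distinct cosets
`g₁P₁, …, g_mP_m ∈ G/𝒫` such that `⋂ᵢ gᵢPᵢgᵢ⁻¹` is infinite.  (For a left coset `A = gP`
the subgroup `gPg⁻¹` is exactly the stabilizer of `A` under the left multiplication action
of `G` on subsets.) -/
def HasFiniteHeight (Ps : Finset (Subgroup G)) : Prop :=
  ∃ n : ℕ, ∀ F : Finset (Set G), ↑F ⊆ cosets Ps →
    ((⨅ A ∈ F, MulAction.stabilizer G A : Subgroup G) : Set G).Infinite → F.card ≤ n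

/-!
If `P` had infinite index in its commensurator, there would be infinitely many cosets `gP` with `g`
commensurating `P`. The stabilizer of such a coset is `gPg⁻¹`, which has finite index in `P`, so
the stabilizers of any finitely many of these cosets meet in a finite-index, hence infinite,
subgroup of `P`. This contradicts any bound on the height.
-/

open MulAction Subgroup

lemma stabilizer_smul_coe_subgroup (g : G) (P : Subgroup G) :
    stabilizer G (g • (P : Set G)) = ConjAct.toConjAct g • P := by
  ext x
  rw [stabilizer_smul_eq_stabilizer_map_conj, stabilizer_subgroup, mem_map_equiv,
    mem_pointwise_smul_iff_inv_smul_mem, ConjAct.smul_def, MulAut.conj_symm_apply]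
  simp

lemma relIndex_stabilizer_smul_ne_zero {P : Subgroup G} {g : G}
    (hg : g ∈ Commensurable.commensurator P) :
    (stabilizer G (g • (P : Set G))).relIndex P ≠ 0 := by
  rw [stabilizer_smul_coe_subgroup]
  exact hg.1

lemma relIndex_biInf_ne_zero {ι : Type*} {L : Subgroup G} {s : Finset ι} {f : ι → Subgroup G}
    (hf : ∀ i ∈ s, (f i).relIndex L ≠ 0) : (⨅ i ∈ s, f i).relIndex L ≠ 0 := by
  rw [iInf_subtype']
  exact relIndex_iInf_ne_zero fun i => hf i i.2

lemma infinite_of_relIndex_ne_zero {J P : Subgroup G} (hP : (P : Set G).Infinite)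
    (h : J.relIndex P ≠ 0) : (J : Set G).Infinite := by
  intro hJ
  have : Finite J := hJ.to_subtype
  have : Finite (J.subgroupOf P) :=
    Finite.of_injective (fun x => (⟨x.1.1, x.2⟩ : J)) fun _ _ hxy =>
      Subtype.ext <| Subtype.ext <| congrArg (fun z : J => (z : G)) hxy
  have : (J.subgroupOf P).FiniteIndex := ⟨h⟩
  have : Finite P := (finite_iff_finite_and_finiteIndex (J.subgroupOf P)).2 ⟨‹_›, ‹_›⟩
  exact hP (Set.finite_coe_iff.1 this)

lemma infinite_image_smul_coe_of_relIndex_eq_zero {P K : Subgroup G} (h : P.relIndex K = 0) :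
    ((· • (P : Set G)) '' (K : Set G)).Infinite := by
  have : Infinite (K ⧸ P.subgroupOf K) := index_eq_zero_iff_infinite.1 h
  refine Set.infinite_of_injective_forall_mem
    (f := fun q : K ⧸ P.subgroupOf K => (q.out : G) • (P : Set G))
    (fun a b hab => ?_) fun q => ⟨q.out, q.out.2, rfl⟩
  rw [← a.out_eq', ← b.out_eq', QuotientGroup.eq, mem_subgroupOf]
  simpa using (leftCoset_eq_iff P).1 hab

/-- A group pair with finite height is reducible: every `P ∈ 𝒫` has finite index in its
commensurator. -/
theorem statement13 (S : Finset G) (Ps : Finset (Subgroup G)) (hpair : IsGroupPair S Ps)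
    (hheight : HasFiniteHeight Ps) :
    ∀ P ∈ Ps, P.relIndex (Subgroup.Commensurable.commensurator P) ≠ 0 := by
  intro P hP hrel
  obtain ⟨n, hn⟩ := hheight
  obtain ⟨F, hF, hFcard⟩ :=
    (infinite_image_smul_coe_of_relIndex_eq_zero hrel).exists_subset_card_eq (n + 1)
  have hF_cosets : ↑F ⊆ cosets Ps := fun A hA => by
    obtain ⟨g, -, rfl⟩ := hF hA
    exact ⟨g, P, hP, rfl⟩
  have hstab : (⨅ A ∈ F, stabilizer G A).relIndex P ≠ 0 :=
    relIndex_biInf_ne_zero fun A hA => by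
      obtain ⟨g, hg, rfl⟩ := hF hA
      exact relIndex_stabilizer_smul_ne_zero hg
  have hle := hn F hF_cosets (infinite_of_relIndex_ne_zero (hpair.infinite P hP) hstab)
  omega

end CIC
end
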